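/- arXiv:1704.08931 — 4 statements merged into one kernel-verified Lean document; each statement's English description precedes it below -/
import Mathlib

section
/- Any stationary policy μ* that is greedy with respect to the optimal value function v* (i.e., μ*(i) attains the maximum in the Bellman equation at each state i) achieves the optimal expected discounted reward: its value function v^{μ*} equals v*. -/
/-- Any stationary policy `μ` that is greedy with respect to the optimal value
function `v*` (it attains the maximum in the Bellman equation at each state) has value
function `v^μ` equal to `v*`. -/
theorem stmt8 {S A : Type*} [Fintype S] [Fintype A] [Nonempty A]
    (P : A → S → S → ℝ)
    (hP0 : ∀ a i j, 0 ≤ P a i j) (hP1 : ∀ a i, ∑ j, P a i j = 1)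
    (R : A → S → S → ℝ)
    (γ : ℝ) (hγ0 : 0 ≤ γ) (hγ1 : γ < 1)
    (T : (S → ℝ) → (S → ℝ))
    (hT : ∀ v i, T v i = Finset.univ.sup' Finset.univ_nonempty
        (fun a => ∑ j, P a i j * (R a i j + γ * v j)))
    (vstar : S → ℝ) (hfix : T vstar = vstar)
    (μ : S → A)
    (hgreedy : ∀ i, (∑ j, P (μ i) i j * (R (μ i) i j + γ * vstar j)) = T vstar i)
    (vμ : S → ℝ)
    (hvμ : ∀ i, vμ i = ∑ j, P (μ i) i j * (R (μ i) i j + γ * vμ j)) :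
    vμ = vstar := by
  by_cases hS : Nonempty S
  · have key : ∀ i, vμ i - vstar i = ∑ j, γ * P (μ i) i j * (vμ j - vstar j) := by
      intro i
      have h1 : vstar i = ∑ j, P (μ i) i j * (R (μ i) i j + γ * vstar j) := by
        rw [hgreedy i, hfix]
      rw [hvμ i, h1, ← Finset.sum_sub_distrib]
      exact Finset.sum_congr rfl fun j _ => by ring
    obtain ⟨i0, _, hmax⟩ := Finset.exists_max_image Finset.univ
      (fun i => |vμ i - vstar i|) Finset.univ_nonempty
    set M := |vμ i0 - vstar i0| with hM
    have hbound : ∀ i, |vμ i - vstar i| ≤ γ * M := by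
      intro i
      rw [key i]
      calc |∑ j, γ * P (μ i) i j * (vμ j - vstar j)|
          ≤ ∑ j, |γ * P (μ i) i j * (vμ j - vstar j)| := Finset.abs_sum_le_sum_abs _ _
        _ ≤ ∑ j, γ * P (μ i) i j * M := by
            apply Finset.sum_le_sum
            intro j _
            rw [abs_mul, abs_of_nonneg (mul_nonneg hγ0 (hP0 _ _ _))]
            exact mul_le_mul_of_nonneg_left (hmax j (Finset.mem_univ j))
              (mul_nonneg hγ0 (hP0 _ _ _))
        _ = γ * M := by
            have : ∑ j, γ * P (μ i) i j * M = γ * M * ∑ j, P (μ i) i j := by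
              rw [Finset.mul_sum]
              exact Finset.sum_congr rfl fun j _ => by ring
            rw [this, hP1, mul_one]
    have hM0 : M ≤ 0 := by
      have := hbound i0
      nlinarith [abs_nonneg (vμ i0 - vstar i0)]
    funext i
    have : |vμ i - vstar i| ≤ 0 := le_trans (hmax i (Finset.mem_univ i))
      hM0
    have := abs_nonpos_iff.mp this
    linarith
  · funext i; exact absurd ⟨i⟩ hS
end

section
/- In policy iteration for a finite discounted MDP, if μ' is greedy with respect to the value function v^μ of policy μ, then v^{μ'} ≥ v^μ pointwise; consequently, since there are finitely many policies, policy iteration terminates at an optimal policy in finitely many steps. -/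
section Aux

variable {S : Type*} [Fintype S]

private lemma maxTrick [Nonempty S] (f : S → ℝ) {γ : ℝ} (hγ0 : 0 ≤ γ) (hγ1 : γ < 1)
    (h : ∀ i, f i ≤ γ * Finset.univ.sup' Finset.univ_nonempty f) : ∀ i, f i ≤ 0 := by
  set M := Finset.univ.sup' Finset.univ_nonempty f with hM
  obtain ⟨i0, -, hi0⟩ := Finset.exists_mem_eq_sup' Finset.univ_nonempty f
  have hMγ : M ≤ γ * M := le_trans (le_of_eq hi0) (h i0)
  have hM0 : M ≤ 0 := by nlinarith
  intro i
  exact le_trans (Finset.le_sup' f (Finset.mem_univ i)) hM0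

private lemma sumDiff {A : Type*} (P : A → S → S → ℝ) (R : A → S → S → ℝ) (γ : ℝ)
    (a : A) (i : S) (u w : S → ℝ) :
    (∑ j, P a i j * (R a i j + γ * u j)) - (∑ j, P a i j * (R a i j + γ * w j))
      = ∑ j, P a i j * (γ * (u j - w j)) := by
  rw [← Finset.sum_sub_distrib]
  exact Finset.sum_congr rfl (fun j _ => by ring)

private lemma sumBound [Nonempty S] {A : Type*} (P : A → S → S → ℝ)
    (hP0 : ∀ a i j, 0 ≤ P a i j) (hP1 : ∀ a i, ∑ j, P a i j = 1)
    {γ : ℝ} (hγ0 : 0 ≤ γ) (a : A) (i : S) (f : S → ℝ) :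
    (∑ j, P a i j * (γ * f j)) ≤ γ * Finset.univ.sup' Finset.univ_nonempty f := by
  set M := Finset.univ.sup' Finset.univ_nonempty f with hM
  have : ∀ j ∈ Finset.univ, P a i j * (γ * f j) ≤ P a i j * (γ * M) := by
    intro j _
    exact mul_le_mul_of_nonneg_left
      (mul_le_mul_of_nonneg_left (Finset.le_sup' f (Finset.mem_univ j)) hγ0) (hP0 a i j)
  calc (∑ j, P a i j * (γ * f j)) ≤ ∑ j, P a i j * (γ * M) := Finset.sum_le_sum this
    _ = (∑ j, P a i j) * (γ * M) := by rw [Finset.sum_mul]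
    _ = γ * M := by rw [hP1 a i, one_mul]

/-- Policy improvement core: if `w ≤ T_ν w` pointwise then `w ≤ V_ν`. -/
private lemma improve {A : Type*} (P : A → S → S → ℝ)
    (hP0 : ∀ a i j, 0 ≤ P a i j) (hP1 : ∀ a i, ∑ j, P a i j = 1)
    (R : A → S → S → ℝ) {γ : ℝ} (hγ0 : 0 ≤ γ) (hγ1 : γ < 1)
    (ν : S → A) (Vν w : S → ℝ)
    (hVν : ∀ i, Vν i = ∑ j, P (ν i) i j * (R (ν i) i j + γ * Vν j))
    (hw : ∀ i, w i ≤ ∑ j, P (ν i) i j * (R (ν i) i j + γ * w j)) :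
    ∀ i, w i ≤ Vν i := by
  cases isEmpty_or_nonempty S with
  | inl h => intro i; exact isEmptyElim i
  | inr h =>
    have key : ∀ i, w i - Vν i ≤ 0 := by
      apply maxTrick (fun i => w i - Vν i) hγ0 hγ1
      intro i
      have h1 : w i - Vν i ≤ ∑ j, P (ν i) i j * (γ * (w j - Vν j)) := by
        rw [← sumDiff P R γ (ν i) i w Vν]
        have := hw i
        have := hVν i
        linarith
      exact le_trans h1 (sumBound P hP0 hP1 hγ0 (ν i) i _)
    intro i; linarith [key i]

/-- Uniqueness of the Bellman fixed point. -/
private lemma fixEq {A : Type*} [Fintype A] [Nonempty A] (P : A → S → S → ℝ)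
    (hP0 : ∀ a i j, 0 ≤ P a i j) (hP1 : ∀ a i, ∑ j, P a i j = 1)
    (R : A → S → S → ℝ) {γ : ℝ} (hγ0 : 0 ≤ γ) (hγ1 : γ < 1)
    (T : (S → ℝ) → (S → ℝ))
    (hT : ∀ v i, T v i = Finset.univ.sup' Finset.univ_nonempty
        (fun a => ∑ j, P a i j * (R a i j + γ * v j)))
    (u w : S → ℝ) (hu : T u = u) (hw : T w = w) : u = w := by
  cases isEmpty_or_nonempty S with
  | inl h => funext i; exact isEmptyElim i
  | inr h =>
    have side : ∀ (u w : S → ℝ), T u = u → T w = w → ∀ i, u i ≤ w i := by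
      intro u w hu hw
      have key : ∀ i, u i - w i ≤ 0 := by
        apply maxTrick (fun i => u i - w i) hγ0 hγ1
        intro i
        set M := Finset.univ.sup' Finset.univ_nonempty (fun i => u i - w i) with hM
        have hTu : T u i ≤ w i + γ * M := by
          rw [hT u i]
          apply Finset.sup'_le
          intro a _
          have h1 : (∑ j, P a i j * (R a i j + γ * u j))
              - (∑ j, P a i j * (R a i j + γ * w j))
              ≤ γ * M := by
            rw [sumDiff P R γ a i u w]
            exact sumBound P hP0 hP1 hγ0 a i _
          have h2 : (∑ j, P a i j * (R a i j + γ * w j)) ≤ T w i := by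
            rw [hT w i]
            exact Finset.le_sup' (fun a => ∑ j, P a i j * (R a i j + γ * w j))
              (Finset.mem_univ a)
          rw [hw] at h2
          linarith
        rw [hu] at hTu
        linarith
      intro i; linarith [key i]
    funext i
    exact le_antisymm (side u w hu hw i) (side w u hw hu i)

end Aux

/-- In policy iteration, if `μ_{k+1}` is greedy with respect to the value
`V(μ_k)` of `μ_k`, then `V(μ_{k+1}) ≥ V(μ_k)` pointwise; consequently, since there are
finitely many policies, policy iteration reaches optimal values (the Bellman fixed point
`v*`) after finitely many steps. -/
theorem stmt9 {S A : Type*} [Fintype S] [Fintype A] [Nonempty A]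
    (P : A → S → S → ℝ)
    (hP0 : ∀ a i j, 0 ≤ P a i j) (hP1 : ∀ a i, ∑ j, P a i j = 1)
    (R : A → S → S → ℝ)
    (γ : ℝ) (hγ0 : 0 ≤ γ) (hγ1 : γ < 1)
    (T : (S → ℝ) → (S → ℝ))
    (hT : ∀ v i, T v i = Finset.univ.sup' Finset.univ_nonempty
        (fun a => ∑ j, P a i j * (R a i j + γ * v j)))
    (vstar : S → ℝ) (hfix : T vstar = vstar)
    (V : (S → A) → S → ℝ)
    (hV : ∀ μ i, V μ i = ∑ j, P (μ i) i j * (R (μ i) i j + γ * V μ j))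
    (μ : ℕ → S → A)
    (hgreedy : ∀ k i,
      (∑ j, P (μ (k+1) i) i j * (R (μ (k+1) i) i j + γ * V (μ k) j)) = T (V (μ k)) i) :
    (∀ k i, V (μ k) i ≤ V (μ (k+1)) i) ∧ (∃ K, ∀ k ≥ K, V (μ k) = vstar) := by
  classical
  -- the improvement step
  have step : ∀ k i, V (μ k) i ≤ V (μ (k+1)) i := by
    intro k
    apply improve P hP0 hP1 R hγ0 hγ1 (μ (k+1)) (V (μ (k+1))) (V (μ k))
        (fun i => hV (μ (k+1)) i)
    intro i
    rw [hgreedy k i, hT]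
    rw [hV (μ k) i]
    exact Finset.le_sup' (fun a => ∑ j, P a i j * (R a i j + γ * V (μ k) j))
      (Finset.mem_univ (μ k i))
  refine ⟨step, ?_⟩
  cases isEmpty_or_nonempty S with
  | inl h => exact ⟨0, fun k _ => funext fun i => isEmptyElim i⟩
  | inr h =>
    have mono : ∀ k l, k ≤ l → ∀ i, V (μ k) i ≤ V (μ l) i := by
      intro k l hkl
      induction l, hkl using Nat.le_induction with
      | base => intro i; exact le_refl _
      | succ n hn ih => intro i; exact le_trans (ih i) (step n i)
    set g : ℕ → ℝ := fun k => ∑ i, V (μ k) i with hg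
    have gmono : ∀ k l, k ≤ l → g k ≤ g l := by
      intro k l hkl
      exact Finset.sum_le_sum (fun i _ => mono k l hkl i)
    -- g has finite range
    set t : Finset ℝ :=
      (Finset.univ.image (fun ν : S → A => ∑ i, V ν i)).filter (fun x => ∃ k, g k = x)
      with ht
    have hmem : ∀ k, g k ∈ t := by
      intro k
      rw [ht, Finset.mem_filter]
      exact ⟨Finset.mem_image.mpr ⟨μ k, Finset.mem_univ _, rfl⟩, k, rfl⟩
    have htne : t.Nonempty := ⟨g 0, hmem 0⟩
    obtain ⟨m, hmt, hmmax⟩ : ∃ m ∈ t, ∀ x ∈ t, x ≤ m := ⟨t.max' htne, t.max'_mem htne,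
      fun x hx => t.le_max' x hx⟩
    obtain ⟨-, K, hK⟩ := Finset.mem_filter.mp hmt
    have hgle : ∀ k, g k ≤ g K := by
      intro k; rw [hK]; exact hmmax (g k) (hmem k)
    -- values are constant from K on
    have hconst : ∀ k, K ≤ k → V (μ k) = V (μ K) := by
      intro k hk
      have hsum : ∑ i, V (μ K) i = ∑ i, V (μ k) i :=
        le_antisymm (gmono K k hk) (hgle k)
      have := (Finset.sum_eq_sum_iff_of_le (fun i _ => mono K k hk i)).mp hsum
      funext i
      exact ((this i (Finset.mem_univ i))).symm
    -- V (μ K) is a fixed point of T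
    have hfixK : T (V (μ K)) = V (μ K) := by
      funext i
      have h1 : V (μ K) i = V (μ (K+1)) i := by
        rw [hconst (K+1) (Nat.le_succ K)]
      have h2 : V (μ (K+1)) i = ∑ j, P (μ (K+1) i) i j * (R (μ (K+1) i) i j + γ * V (μ K) j) := by
        rw [hV (μ (K+1)) i, hconst (K+1) (Nat.le_succ K)]
      rw [h1, h2, hgreedy K i]
    have hKstar : V (μ K) = vstar :=
      fixEq P hP0 hP1 R hγ0 hγ1 T hT (V (μ K)) vstar hfixK hfix
    exact ⟨K, fun k hk => by rw [hconst k hk, hKstar]⟩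
end

section
/- Let X₁, …, X_N be independent discrete random variables and f(x₁,…,x_N) = argmin index of the maximum (any selection of an index attaining max_n x_n). Then for each n, the characteristic graph G_n of f at coordinate n satisfies: if {x, y} is a non-edge of G_n with x ≠ y, then for every other value z in the support, both {x, z} and {y, z} are edges of G_n. -/
/-!
Against a constant background `c`, an argmax selection picks coordinate `n` when its value
exceeds `c` and some other coordinate when its value is below `c`; hence any `u < c < w` are
adjacent in `G_n`. So a non-edge `x < y` has no value strictly between its ends, every other `z`
lies beyond one end and is adjacent to the far one, and, `x` and `y` being interchangeable for
`f`, adjacent to both.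
-/

open Function

/-- The characteristic graph of `f` at coordinate `n`. -/
def CharAdj {ι S : Type*} [DecidableEq ι] (f : (ι → S) → ι) (n : ι) (x y : S) : Prop :=
  ∃ s : ι → S, f (update s n x) ≠ f (update s n y)

namespace CharAdj

variable {ι S : Type*} [DecidableEq ι] {f : (ι → S) → ι} {n : ι} {a b c z : S}

theorem symm (h : CharAdj f n a b) : CharAdj f n b a :=
  let ⟨s, hs⟩ := h; ⟨s, hs.symm⟩

theorem congr_right_of_not (hab : ¬ CharAdj f n a b) :
    CharAdj f n z a ↔ CharAdj f n z b := by
  have hab' : ∀ s, f (update s n a) = f (update s n b) := by simpa [CharAdj] using hab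
  simp only [CharAdj, hab']

variable [LinearOrder S] (hf : ∀ (v : ι → S) (i : ι), v i ≤ v (f v))
include hf

theorem select_update_const_of_lt (hca : c < a) : f (update (fun _ => c) n a) = n := by
  by_contra hfn
  have := hf (update (fun _ => c) n a) n
  rw [update_self, update_of_ne hfn] at this
  exact this.not_gt hca

theorem select_update_const_ne_of_lt [Nontrivial ι] (hac : a < c) :
    f (update (fun _ => c) n a) ≠ n := by
  intro hfn
  obtain ⟨m, hm⟩ := exists_ne n
  have := hf (update (fun _ => c) n a) m
  rw [hfn, update_self, update_of_ne hm] at this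
  exact this.not_gt hac

theorem of_lt_of_lt [Nontrivial ι] (hac : a < c) (hcb : c < b) : CharAdj f n a b :=
  ⟨fun _ => c, by
    rw [select_update_const_of_lt hf hcb]
    exact select_update_const_ne_of_lt hf hac⟩

theorem of_not_of_lt [Nontrivial ι] (hab : a < b) (hnab : ¬ CharAdj f n a b)
    (hza : z ≠ a) (hzb : z ≠ b) : CharAdj f n a z ∧ CharAdj f n b z := by
  suffices CharAdj f n z a ∨ CharAdj f n z b by
    have hz : CharAdj f n z a ∧ CharAdj f n z b := by
      rcases this with h | h
      · exact ⟨h, (congr_right_of_not hnab).1 h⟩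
      · exact ⟨(congr_right_of_not hnab).2 h, h⟩
    exact ⟨hz.1.symm, hz.2.symm⟩
  rcases hza.lt_or_gt with hz | haz
  · exact .inr (of_lt_of_lt hf hz hab)
  rcases hzb.lt_or_gt with hz | hbz
  · exact absurd (of_lt_of_lt hf haz hz) hnab
  · exact .inl (of_lt_of_lt hf hab hbz).symm

end CharAdj

theorem stmt13_general {N : ℕ} (hN : 2 ≤ N) {S : Type*} [LinearOrder S]
    (f : (Fin N → S) → Fin N) (hf : ∀ (v : Fin N → S) (n : Fin N), v n ≤ v (f v))
    (Edge : Fin N → S → S → Prop)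
    (hEdge : ∀ m x y, Edge m x y ↔ ∃ s : Fin N → S,
      f (Function.update s m x) ≠ f (Function.update s m y))
    (n : Fin N) (x y : S) (hxy : x ≠ y) (hne : ¬ Edge n x y) :
    ∀ z : S, z ≠ x → z ≠ y → Edge n x z ∧ Edge n y z := by
  have : Nontrivial (Fin N) := Fin.nontrivial_iff_two_le.2 hN
  have hEdge' : ∀ a b, Edge n a b ↔ CharAdj f n a b := hEdge n
  intro z hzx hzy
  simp only [hEdge'] at hne ⊢
  rcases hxy.lt_or_gt with h | h
  · exact CharAdj.of_not_of_lt hf h hne hzx hzy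
  · exact (CharAdj.of_not_of_lt hf h (fun h' => hne h'.symm) hzy hzx).symm

/-- For the argmax selection function `f` on `N ≥ 2` i.i.d. variables on a
finite totally ordered full support `S`, if `{x, y}` (with `x ≠ y`) is a non-edge of the
characteristic graph `G_n` at coordinate `n`, then for every other value `z`, both
`{x, z}` and `{y, z}` are edges of `G_n`. -/
theorem stmt13 {N : ℕ} (hN : 2 ≤ N) {S : Type*} [Fintype S] [LinearOrder S]
    (f : (Fin N → S) → Fin N) (hf : ∀ (v : Fin N → S) (n : Fin N), v n ≤ v (f v))
    (Edge : Fin N → S → S → Prop)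
    (hEdge : ∀ m x y, Edge m x y ↔ ∃ s : Fin N → S,
      f (Function.update s m x) ≠ f (Function.update s m y))
    (n : Fin N) (x y : S) (hxy : x ≠ y) (hne : ¬ Edge n x y) :
    ∀ z : S, z ≠ x → z ≠ y → Edge n x z ∧ Edge n y z :=
  stmt13_general hN f hf Edge hEdge n x y hxy hne
end

section
/- With the argmax selection function f on i.i.d. variables, if {x, y} with x ≠ y is a non-edge of the characteristic graph G_n at some coordinate n, then {x, y} is an edge of the characteristic graph G_{n'} for every other coordinate n' ≠ n. -/
/-- For the argmax selection function `f` on `N ≥ 2` i.i.d. variables on a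
finite totally ordered full support `S`, if `{x, y}` (with `x ≠ y`) is a non-edge of the
characteristic graph at some coordinate `n`, then `{x, y}` is an edge of the
characteristic graph at every other coordinate `n' ≠ n`. -/
theorem stmt14 {N : ℕ} (hN : 2 ≤ N) {S : Type*} [Fintype S] [LinearOrder S]
    (f : (Fin N → S) → Fin N) (hf : ∀ (v : Fin N → S) (n : Fin N), v n ≤ v (f v))
    (Edge : Fin N → S → S → Prop)
    (hEdge : ∀ m x y, Edge m x y ↔ ∃ s : Fin N → S,
      f (Function.update s m x) ≠ f (Function.update s m y))
    (n : Fin N) (x y : S) (hxy : x ≠ y) (hne : ¬ Edge n x y) :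
    ∀ n' : Fin N, n' ≠ n → Edge n' x y := by
  intro n' hn'
  have main : ∀ a b : S, a < b →
      (∀ s : Fin N → S, f (Function.update s n a) = f (Function.update s n b)) →
      f (Function.update (fun _ => a) n' a) ≠ f (Function.update (fun _ => a) n' b) := by
    intro a b hab hsame
    have key : ∀ m : Fin N, f (Function.update (fun _ => a) m b) = m := by
      intro m
      set v : Fin N → S := Function.update (fun _ => a) m b with hv
      by_contra hm
      have h1 : v (f v) = a := Function.update_of_ne hm b (fun _ => a)
      have h2 : v m ≤ v (f v) := hf v m
      have h3 : v m = b := by simp [hv]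
      rw [h1, h3] at h2
      exact absurd h2 (not_le.mpr hab)
    have hca : f (fun _ => a) = n := by
      have := hsame (fun _ => a)
      have h1 : Function.update (fun _ : Fin N => a) n a = fun _ => a := by
        funext k; simp [Function.update]
      rw [h1, key n] at this
      exact this
    have h2 : Function.update (fun _ : Fin N => a) n' a = fun _ => a := by
      funext k; simp [Function.update]
    rw [h2, hca, key n']
    exact Ne.symm hn'
  rw [hEdge]
  have hsame : ∀ s : Fin N → S, f (Function.update s n x) = f (Function.update s n y) := by
    intro s
    by_contra h
    exact hne ((hEdge n x y).mpr ⟨s, h⟩)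
  rcases hxy.lt_or_gt with h | h
  · exact ⟨fun _ => x, main x y h hsame⟩
  · exact ⟨fun _ => y, (main y x h (fun s => (hsame s).symm)).symm⟩
end
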